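/- Generalized Leftover Hash Lemma: let {H_x : {0,1}^n → {0,1}^ℓ}_{x∈X} be a universal family of hash functions. Then for any jointly distributed random variables W (over {0,1}^n) and I, SD((H_X(W), X, I), (U_ℓ, X, I)) ≤ ½·√(2^{−H̃∞(W|I)} · 2^ℓ), where X is uniform on X independent of (W, I) and U_ℓ is uniform on {0,1}^ℓ. In particular, universal hash families are average-case (n, m, ℓ, ε)-strong extractors whenever ℓ ≤ m − 2·log₂(1/ε) + 2. -/
import Mathlib


open Finset

/-- A probability distribution on a finite type. -/
def IsDist {α : Type*} [Fintype α] (p : α → ℝ) : Prop :=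
  (∀ a, 0 ≤ p a) ∧ ∑ a, p a = 1

/-- Average min-entropy `H̃∞(A | B)`. -/
noncomputable def avgMinEntropy {α β : Type*} [Fintype α] [Fintype β] (p : α × β → ℝ) : ℝ :=
  - Real.logb 2 (∑ b, ⨆ a, p (a, b))

/-- Statistical distance between two distributions on the same finite type. -/
noncomputable def statDist {V : Type*} [Fintype V] (p q : V → ℝ) : ℝ :=
  (∑ v, |p v - q v|) / 2

/-- Distribution of `(Ext(W; X), X, I)` for a joint distribution `p` of `(W, I)`,
with `X` a uniform seed. -/
noncomputable def extDistI {A X O ι : Type*} [Fintype A] [Fintype X] [Fintype O] [Fintype ι]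
    [DecidableEq O] (Ext : A → X → O) (p : A × ι → ℝ) : O × X × ι → ℝ :=
  fun x => (∑ a, if Ext a x.2.1 = x.1 then p (a, x.2.2) else 0) / (Fintype.card X : ℝ)

/-- Distribution of `(U_ℓ, X, I)` for a joint distribution `p` of `(W, I)`. -/
noncomputable def extUniI {A X O ι : Type*} [Fintype A] [Fintype X] [Fintype O] [Fintype ι]
    (p : A × ι → ℝ) : O × X × ι → ℝ :=
  fun x => (∑ a, p (a, x.2.2)) / ((Fintype.card O : ℝ) * (Fintype.card X : ℝ))

lemma LHL.cs1 {V : Type*} [Fintype V] (d : V → ℝ) :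
    ∑ v, |d v| ≤ Real.sqrt ((Fintype.card V : ℝ) * ∑ v, d v ^ 2) := by
  have h := Finset.sum_mul_sq_le_sq_mul_sq Finset.univ (fun _ : V => (1:ℝ)) (fun v => |d v|)
  simp only [one_mul, one_pow, sq_abs, Finset.sum_const, Finset.card_univ, nsmul_eq_mul,
    mul_one] at h
  calc ∑ v, |d v| = Real.sqrt ((∑ v, |d v|) ^ 2) := by
        rw [Real.sqrt_sq (Finset.sum_nonneg fun v _ => abs_nonneg _)]
    _ ≤ _ := Real.sqrt_le_sqrt h

lemma LHL.cs2 {V : Type*} [Fintype V] (f g : V → ℝ) (hf : ∀ v, 0 ≤ f v) (hg : ∀ v, 0 ≤ g v) :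
    ∑ v, f v * g v ≤ Real.sqrt (∑ v, f v ^ 2) * Real.sqrt (∑ v, g v ^ 2) := by
  have h := Finset.sum_mul_sq_le_sq_mul_sq Finset.univ f g
  calc ∑ v, f v * g v = Real.sqrt ((∑ v, f v * g v) ^ 2) := by
        rw [Real.sqrt_sq (Finset.sum_nonneg fun v _ => mul_nonneg (hf v) (hg v))]
    _ ≤ Real.sqrt ((∑ v, f v ^ 2) * ∑ v, g v ^ 2) := Real.sqrt_le_sqrt h
    _ = _ := Real.sqrt_mul (Finset.sum_nonneg fun v _ => sq_nonneg _) _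


lemma LHL.collision {n ℓ : ℕ} {X : Type} [Fintype X]
    (H : X → (Fin n → Bool) → (Fin ℓ → Bool))
    (huniv : ∀ a b : Fin n → Bool, a ≠ b →
      ((Finset.univ.filter fun x => H x a = H x b).card : ℝ) / (Fintype.card X : ℝ)
        = 1 / (2 : ℝ) ^ ℓ)
    (hX : (0:ℝ) < (Fintype.card X : ℝ))
    (q : (Fin n → Bool) → ℝ) (hq : ∀ a, 0 ≤ q a) :
    ∑ x : X, ∑ o : Fin ℓ → Bool, (∑ a, if H x a = o then q a else 0) ^ 2
      ≤ (Fintype.card X : ℝ) * ∑ a, q a ^ 2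
        + ((Fintype.card X : ℝ) / 2 ^ ℓ) * (∑ a, q a) ^ 2 := by
  have key : ∀ x : X, ∑ o : Fin ℓ → Bool, (∑ a, if H x a = o then q a else 0) ^ 2
      = ∑ a, ∑ b, (if H x a = H x b then q a * q b else 0) := by
    intro x
    have : ∀ o : Fin ℓ → Bool, (∑ a, if H x a = o then q a else 0) ^ 2
        = ∑ a, ∑ b, ((if H x a = o then q a else 0) * (if H x b = o then q b else 0)) := by
      intro o; rw [sq, Finset.sum_mul_sum]
    rw [Finset.sum_congr rfl fun o _ => this o]
    rw [Finset.sum_comm]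
    refine Finset.sum_congr rfl fun a _ => ?_
    rw [Finset.sum_comm]
    refine Finset.sum_congr rfl fun b _ => ?_
    by_cases hab : H x a = H x b
    · simp [hab, ite_mul, mul_ite]
    · simp only [hab, if_false]
      apply Finset.sum_eq_zero
      intro o _
      by_cases h1 : H x a = o
      · have h2 : H x b ≠ o := fun h => hab (h1.trans h.symm)
        simp [h1, h2]
      · simp [h1]
  rw [Finset.sum_congr rfl fun x _ => key x, Finset.sum_comm]
  have swap : ∀ a, ∑ x : X, ∑ b, (if H x a = H x b then q a * q b else 0)
      = ∑ b, ((Finset.univ.filter fun x => H x a = H x b).card : ℝ) * (q a * q b) := by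
    intro a
    rw [Finset.sum_comm]
    refine Finset.sum_congr rfl fun b _ => ?_
    rw [← Finset.sum_filter, Finset.sum_const, nsmul_eq_mul]
  rw [Finset.sum_congr rfl fun a _ => swap a]
  have hdiag : ∀ a, ((Finset.univ.filter fun x => H x a = H x a).card : ℝ) = (Fintype.card X : ℝ) := by
    intro a; simp [Finset.filter_true_of_mem, Finset.card_univ]
  have hoff : ∀ a b, a ≠ b →
      ((Finset.univ.filter fun x => H x a = H x b).card : ℝ) = (Fintype.card X : ℝ) / 2 ^ ℓ := by
    intro a b hab
    have := huniv a b hab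
    field_simp at this ⊢
    linarith [this]
  calc ∑ a, ∑ b, ((Finset.univ.filter fun x => H x a = H x b).card : ℝ) * (q a * q b)
      ≤ ∑ a, ((Fintype.card X : ℝ) * q a ^ 2
          + ∑ b, ((Fintype.card X : ℝ) / 2 ^ ℓ) * (q a * q b)) := by
        refine Finset.sum_le_sum fun a _ => ?_
        rw [← Finset.add_sum_erase _ _ (Finset.mem_univ a)]
        rw [← Finset.add_sum_erase _ (fun b => ((Fintype.card X : ℝ) / 2 ^ ℓ) * (q a * q b)) (Finset.mem_univ a)]
        have e1 : ((Finset.univ.filter fun x => H x a = H x a).card : ℝ) * (q a * q a)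
            = (Fintype.card X : ℝ) * q a ^ 2 := by rw [hdiag a]; ring
        have h1 : 0 ≤ ((Fintype.card X : ℝ) / 2 ^ ℓ) * (q a * q a) :=
          mul_nonneg (by positivity) (mul_nonneg (hq a) (hq a))
        have h2 : ∑ b ∈ Finset.univ.erase a, ((Finset.univ.filter fun x => H x a = H x b).card : ℝ) * (q a * q b)
            ≤ ∑ b ∈ Finset.univ.erase a, ((Fintype.card X : ℝ) / 2 ^ ℓ) * (q a * q b) := by
          refine Finset.sum_le_sum fun b hb => ?_
          rw [hoff a b (fun h => (Finset.mem_erase.mp hb).1 h.symm)]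
        rw [e1]
        linarith
    _ = (Fintype.card X : ℝ) * ∑ a, q a ^ 2 + ((Fintype.card X : ℝ) / 2 ^ ℓ) * (∑ a, q a) ^ 2 := by
        rw [Finset.sum_add_distrib, ← Finset.mul_sum]
        congr 1
        rw [sq, Finset.sum_mul, Finset.mul_sum]
        refine Finset.sum_congr rfl fun a _ => ?_
        rw [Finset.mul_sum Finset.univ q (q a), Finset.mul_sum]

set_option maxHeartbeats 1000000 in
lemma LHL.per_i {n ℓ : ℕ} {X : Type} [Fintype X]
    (H : X → (Fin n → Bool) → (Fin ℓ → Bool))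
    (huniv : ∀ a b : Fin n → Bool, a ≠ b →
      ((Finset.univ.filter fun x => H x a = H x b).card : ℝ) / (Fintype.card X : ℝ)
        = 1 / (2 : ℝ) ^ ℓ)
    (hX : (0:ℝ) < (Fintype.card X : ℝ))
    (q : (Fin n → Bool) → ℝ) (hq : ∀ a, 0 ≤ q a) :
    ∑ o : Fin ℓ → Bool, ∑ x : X,
      |(∑ a, if H x a = o then q a else 0) / (Fintype.card X : ℝ)
        - (∑ a, q a) / ((Fintype.card (Fin ℓ → Bool) : ℝ) * (Fintype.card X : ℝ))|
      ≤ Real.sqrt ((2:ℝ) ^ ℓ * ∑ a, q a ^ 2) := by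
  set cX : ℝ := (Fintype.card X : ℝ) with hcX
  set cO : ℝ := (Fintype.card (Fin ℓ → Bool) : ℝ) with hcOdef
  have hcO : cO = 2 ^ ℓ := by
    rw [hcOdef]; norm_num [Fintype.card_fun]
  have h2 : (0:ℝ) < (2:ℝ) ^ ℓ := by positivity
  set s : ℝ := ∑ a, q a with hs
  set c : ℝ := s / (cO * cX) with hc
  set f : X → (Fin ℓ → Bool) → ℝ := fun x o => ∑ a, if H x a = o then q a else 0 with hf
  -- sum of f
  have hsum_f : ∑ x : X, ∑ o : Fin ℓ → Bool, f x o = cX * s := by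
    have : ∀ x : X, ∑ o : Fin ℓ → Bool, f x o = s := by
      intro x
      rw [hf, Finset.sum_comm]
      refine Finset.sum_congr rfl fun a _ => ?_
      simp [Finset.sum_ite_eq]
    rw [Finset.sum_congr rfl fun x _ => this x, Finset.sum_const, Finset.card_univ,
      nsmul_eq_mul, hcX]
  -- expanded square identity
  have hE : ∑ x : X, ∑ o : Fin ℓ → Bool, (f x o / cX - c) ^ 2
      = (∑ x : X, ∑ o : Fin ℓ → Bool, (f x o) ^ 2) * (1 / cX ^ 2)
        - (2 * c / cX) * (cX * s) + cX * cO * c ^ 2 := by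
    have expand : ∀ (x : X) (o : Fin ℓ → Bool), (f x o / cX - c) ^ 2
        = (f x o) ^ 2 * (1 / cX ^ 2) - (2 * c / cX) * f x o + c ^ 2 := by
      intro x o; field_simp; ring
    calc ∑ x : X, ∑ o : Fin ℓ → Bool, (f x o / cX - c) ^ 2
        = ∑ x : X, ((∑ o : Fin ℓ → Bool, (f x o) ^ 2) * (1 / cX ^ 2)
            - (2 * c / cX) * (∑ o : Fin ℓ → Bool, f x o) + cO * c ^ 2) := by
          refine Finset.sum_congr rfl fun x _ => ?_
          rw [Finset.sum_congr rfl fun o _ => expand x o]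
          rw [Finset.sum_add_distrib, Finset.sum_sub_distrib, ← Finset.sum_mul,
            ← Finset.mul_sum, Finset.sum_const, Finset.card_univ, nsmul_eq_mul, hcOdef]
      _ = _ := by
          rw [Finset.sum_add_distrib, Finset.sum_sub_distrib, ← Finset.sum_mul,
            ← Finset.mul_sum, Finset.sum_const, Finset.card_univ, nsmul_eq_mul,
            hsum_f, ← hcX]
          ring
  have hcol := LHL.collision H huniv hX q hq
  have hbound : ∑ x : X, ∑ o : Fin ℓ → Bool, (f x o / cX - c) ^ 2 ≤ (∑ a, q a ^ 2) / cX := by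
    rw [hE]
    have step : (cX * (∑ a, q a ^ 2) + (cX / 2 ^ ℓ) * s ^ 2) * (1 / cX ^ 2)
        - (2 * c / cX) * (cX * s) + cX * cO * c ^ 2 = (∑ a, q a ^ 2) / cX := by
      rw [hc, hcO]; field_simp; ring
    have hmul := mul_le_mul_of_nonneg_right hcol (le_of_lt (by positivity : (0:ℝ) < 1 / cX ^ 2))
    linarith
  -- Cauchy-Schwarz
  have key := LHL.cs1 (V := (Fin ℓ → Bool) × X) (fun v => f v.2 v.1 / cX - c)
  have hcard : (Fintype.card ((Fin ℓ → Bool) × X) : ℝ) = cO * cX := by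
    rw [Fintype.card_prod]; push_cast [hcX, hcOdef]; ring
  simp only [Fintype.sum_prod_type] at key
  rw [hcard] at key
  calc ∑ o : Fin ℓ → Bool, ∑ x : X, |f x o / cX - s / (cO * cX)|
      ≤ Real.sqrt (cO * cX * ∑ o : Fin ℓ → Bool, ∑ x : X, (f x o / cX - c) ^ 2) := key
    _ ≤ Real.sqrt ((2:ℝ) ^ ℓ * ∑ a, q a ^ 2) := by
        apply Real.sqrt_le_sqrt
        rw [Finset.sum_comm]
        calc cO * cX * ∑ x : X, ∑ o : Fin ℓ → Bool, (f x o / cX - c) ^ 2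
            ≤ cO * cX * ((∑ a, q a ^ 2) / cX) := by
              apply mul_le_mul_of_nonneg_left hbound
              rw [hcO]; positivity
          _ = (2:ℝ) ^ ℓ * ∑ a, q a ^ 2 := by rw [hcO]; field_simp

lemma LHL.rearrange {O X ι : Type*} [Fintype O] [Fintype X] [Fintype ι] (g : O → X → ι → ℝ) :
    ∑ v : O × X × ι, g v.1 v.2.1 v.2.2 = ∑ i, ∑ o, ∑ x, g o x i := by
  rw [Fintype.sum_prod_type]
  simp only [Fintype.sum_prod_type]
  rw [Finset.sum_congr rfl fun o _ => Finset.sum_comm, Finset.sum_comm]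

lemma LHL.main_bound {n ℓ : ℕ} {X : Type} [Fintype X]
    (H : X → (Fin n → Bool) → (Fin ℓ → Bool))
    (huniv : ∀ a b : Fin n → Bool, a ≠ b →
      ((Finset.univ.filter fun x => H x a = H x b).card : ℝ) / (Fintype.card X : ℝ)
        = 1 / (2 : ℝ) ^ ℓ)
    (ι : Type) [Fintype ι] (p : (Fin n → Bool) × ι → ℝ) (hp : IsDist p) :
    statDist (extDistI (fun a x => H x a) p) (extUniI (X := X) (O := Fin ℓ → Bool) p)
      ≤ (1 / 2) * Real.sqrt ((2 : ℝ) ^ (-(avgMinEntropy p)) * (2 : ℝ) ^ ℓ) := by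
  obtain ⟨hp0, hp1⟩ := hp
  by_cases hXe : Fintype.card X = 0
  · haveI : IsEmpty X := Fintype.card_eq_zero_iff.mp hXe
    have hz : ∑ v : (Fin ℓ → Bool) × X × ι,
        |extDistI (fun a x => H x a) p v - extUniI (X := X) (O := Fin ℓ → Bool) p v| = 0 :=
      Finset.sum_eq_zero fun v _ => (IsEmpty.false v.2.1).elim
    simp only [statDist, hz, zero_div]
    positivity
  have hX : (0:ℝ) < (Fintype.card X : ℝ) := by
    exact_mod_cast Nat.pos_of_ne_zero hXe
  set cX : ℝ := (Fintype.card X : ℝ) with hcX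
  set cO : ℝ := (Fintype.card (Fin ℓ → Bool) : ℝ) with hcOdef
  set M : ι → ℝ := fun i => ⨆ a, p (a, i) with hM
  set s : ι → ℝ := fun i => ∑ a, p (a, i) with hsdef
  have hMp : ∀ (a : Fin n → Bool) (i : ι), p (a, i) ≤ M i := by
    intro a i
    show p (a, i) ≤ ⨆ a, p (a, i)
    exact le_ciSup (Set.Finite.bddAbove (Set.finite_range fun a => p (a, i))) a
  have hM0 : ∀ i, 0 ≤ M i := fun i => le_trans (hp0 (default, i)) (hMp default i)
  have hs0 : ∀ i, 0 ≤ s i := fun i => Finset.sum_nonneg fun a _ => hp0 (a, i)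
  have hssum : ∑ i, s i = 1 := by
    rw [← hp1, Fintype.sum_prod_type_right]
  -- positivity of S = ∑ M
  have hSpos : 0 < ∑ i, M i := by
    have h1 : (1:ℝ) ≤ ∑ i, (Fintype.card (Fin n → Bool) : ℝ) * M i := by
      rw [← hssum]
      refine Finset.sum_le_sum fun i _ => ?_
      calc s i = ∑ a, p (a, i) := rfl
        _ ≤ ∑ _a : Fin n → Bool, M i := Finset.sum_le_sum fun a _ => hMp a i
        _ = (Fintype.card (Fin n → Bool) : ℝ) * M i := by
            rw [Finset.sum_const, Finset.card_univ, nsmul_eq_mul]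
    rw [← Finset.mul_sum] at h1
    by_contra hcon
    push_neg at hcon
    have hcA : (0:ℝ) < (Fintype.card (Fin n → Bool) : ℝ) := by
      exact_mod_cast Fintype.card_pos
    nlinarith
  have hpow : (2 : ℝ) ^ (-(avgMinEntropy p)) = ∑ i, M i := by
    unfold avgMinEntropy
    rw [neg_neg]
    exact Real.rpow_logb two_pos (by norm_num) hSpos
  -- per-index bounds
  have hTi : ∀ i : ι, ∑ o : Fin ℓ → Bool, ∑ x : X,
      |(∑ a, if H x a = o then p (a, i) else 0) / cX - s i / (cO * cX)|
      ≤ Real.sqrt (s i) * Real.sqrt ((2:ℝ) ^ ℓ * M i) := by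
    intro i
    have h1 := LHL.per_i H huniv hX (fun a => p (a, i)) (fun a => hp0 (a, i))
    refine le_trans h1 ?_
    rw [← Real.sqrt_mul (hs0 i)]
    apply Real.sqrt_le_sqrt
    have h2 : ∑ a, p (a, i) ^ 2 ≤ M i * s i := by
      rw [hsdef, Finset.mul_sum]
      refine Finset.sum_le_sum fun a _ => ?_
      rw [sq]
      exact mul_le_mul_of_nonneg_right (hMp a i) (hp0 (a, i))
    calc (2:ℝ) ^ ℓ * ∑ a, p (a, i) ^ 2 ≤ (2:ℝ) ^ ℓ * (M i * s i) := by
          exact mul_le_mul_of_nonneg_left h2 (by positivity)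
      _ = s i * ((2:ℝ) ^ ℓ * M i) := by ring
  -- outer Cauchy-Schwarz
  have houter : ∑ i, Real.sqrt (s i) * Real.sqrt ((2:ℝ) ^ ℓ * M i)
      ≤ Real.sqrt ((2 : ℝ) ^ (-(avgMinEntropy p)) * (2 : ℝ) ^ ℓ) := by
    have h := LHL.cs2 (fun i => Real.sqrt (s i)) (fun i => Real.sqrt ((2:ℝ) ^ ℓ * M i))
      (fun i => Real.sqrt_nonneg _) (fun i => Real.sqrt_nonneg _)
    refine le_trans h ?_
    have e1 : ∑ i, Real.sqrt (s i) ^ 2 = 1 := by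
      rw [Finset.sum_congr rfl fun i _ => Real.sq_sqrt (hs0 i), hssum]
    have e2 : ∑ i, Real.sqrt ((2:ℝ) ^ ℓ * M i) ^ 2 = (2:ℝ) ^ ℓ * ∑ i, M i := by
      rw [Finset.sum_congr rfl fun i _ => Real.sq_sqrt
        (mul_nonneg (by positivity) (hM0 i)), ← Finset.mul_sum]
    rw [e1, e2, Real.sqrt_one, one_mul, hpow]
    apply Real.sqrt_le_sqrt
    rw [mul_comm]
  -- put together
  simp only [statDist, extDistI, extUniI]
  rw [show (∑ v : (Fin ℓ → Bool) × X × ι,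
        |(∑ a, if H v.2.1 a = v.1 then p (a, v.2.2) else 0) / cX
          - (∑ a, p (a, v.2.2)) / (cO * cX)|)
      = ∑ i, ∑ o : Fin ℓ → Bool, ∑ x : X,
        |(∑ a, if H x a = o then p (a, i) else 0) / cX - (∑ a, p (a, i)) / (cO * cX)|
    from LHL.rearrange fun o x i =>
      |(∑ a, if H x a = o then p (a, i) else 0) / cX - (∑ a, p (a, i)) / (cO * cX)|]
  have final : ∑ i, ∑ o : Fin ℓ → Bool, ∑ x : X,
      |(∑ a, if H x a = o then p (a, i) else 0) / cX - (∑ a, p (a, i)) / (cO * cX)|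
      ≤ Real.sqrt ((2 : ℝ) ^ (-(avgMinEntropy p)) * (2 : ℝ) ^ ℓ) :=
    le_trans (Finset.sum_le_sum fun i _ => hTi i) houter
  linarith

/-- **Generalized Leftover Hash Lemma.** If `{H_x : {0,1}^n → {0,1}^ℓ}_{x ∈ X}`
is a universal family of hash functions, then for any jointly distributed `(W, I)`,
`SD((H_X(W), X, I), (U_ℓ, X, I)) ≤ ½·√(2^{−H̃∞(W|I)}·2^ℓ)`; in particular, universal hash
families are average-case `(n, m, ℓ, ε)`-strong extractors whenever
`ℓ ≤ m − 2·log₂(1/ε) + 2`. -/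
theorem generalized_leftover_hash_lemma {n ℓ : ℕ} {X : Type} [Fintype X]
    (H : X → (Fin n → Bool) → (Fin ℓ → Bool))
    (huniv : ∀ a b : Fin n → Bool, a ≠ b →
      ((Finset.univ.filter fun x => H x a = H x b).card : ℝ) / (Fintype.card X : ℝ)
        = 1 / (2 : ℝ) ^ ℓ) :
    (∀ (ι : Type) [Fintype ι] (p : (Fin n → Bool) × ι → ℝ), IsDist p →
      statDist (extDistI (fun a x => H x a) p)
          (extUniI (X := X) (O := Fin ℓ → Bool) p)
        ≤ (1 / 2) * Real.sqrt ((2 : ℝ) ^ (-(avgMinEntropy p)) * (2 : ℝ) ^ ℓ)) ∧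
    (∀ m ε : ℝ, 0 < ε → (ℓ : ℝ) ≤ m - 2 * Real.logb 2 (1 / ε) + 2 →
      ∀ (ι : Type) [Fintype ι] (p : (Fin n → Bool) × ι → ℝ),
        IsDist p → m ≤ avgMinEntropy p →
          statDist (extDistI (fun a x => H x a) p)
            (extUniI (X := X) (O := Fin ℓ → Bool) p) ≤ ε) := by
  constructor
  · exact fun ι _ p hp => LHL.main_bound H huniv ι p hp
  · intro m ε hε hℓ ι _ p hp hm
    refine le_trans (LHL.main_bound H huniv ι p hp) ?_
    have hmono : (2:ℝ) ^ (-(avgMinEntropy p)) ≤ (2:ℝ) ^ (-m) :=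
      (Real.rpow_le_rpow_left_iff (by norm_num)).mpr (by linarith)
    have hstep : (2:ℝ) ^ (-m) * (2:ℝ) ^ ℓ ≤ 4 * ε ^ 2 := by
      have e1 : (2:ℝ) ^ (-m) * (2:ℝ) ^ ℓ = (2:ℝ) ^ (-m + (ℓ:ℝ)) := by
        rw [Real.rpow_add two_pos, Real.rpow_natCast]
      have e2 : -m + (ℓ:ℝ) ≤ 2 + 2 * Real.logb 2 ε := by
        rw [one_div, Real.logb_inv] at hℓ
        linarith
      have e3 : (2:ℝ) ^ (2 + 2 * Real.logb 2 ε : ℝ) = 4 * ε ^ 2 := by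
        rw [Real.rpow_add two_pos]
        congr 1
        · rw [show (2:ℝ) = ((2:ℕ):ℝ) by norm_num, Real.rpow_natCast]; norm_num
        · rw [mul_comm (2:ℝ) (Real.logb 2 ε), Real.rpow_mul (by norm_num),
            Real.rpow_logb two_pos (by norm_num) hε,
            show (2:ℝ) = ((2:ℕ):ℝ) by norm_num, Real.rpow_natCast]
      calc (2:ℝ) ^ (-m) * (2:ℝ) ^ ℓ = (2:ℝ) ^ (-m + (ℓ:ℝ)) := e1
        _ ≤ (2:ℝ) ^ (2 + 2 * Real.logb 2 ε : ℝ) :=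
            (Real.rpow_le_rpow_left_iff (by norm_num)).mpr e2
        _ = 4 * ε ^ 2 := e3
    have hs : Real.sqrt ((2:ℝ) ^ (-(avgMinEntropy p)) * (2:ℝ) ^ ℓ) ≤ 2 * ε := by
      calc Real.sqrt ((2:ℝ) ^ (-(avgMinEntropy p)) * (2:ℝ) ^ ℓ)
          ≤ Real.sqrt (4 * ε ^ 2) := by
            apply Real.sqrt_le_sqrt
            refine le_trans (mul_le_mul_of_nonneg_right hmono (by positivity)) hstep
        _ = 2 * ε := by
            rw [show (4:ℝ) * ε ^ 2 = (2 * ε) ^ 2 by ring, Real.sqrt_sq (by linarith)]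
    linarith
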